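/- arXiv:1308.5171 — 6 statements merged into one kernel-verified Lean document; each statement's English description precedes it below -/
import Mathlib

section
/- For any real-valued absolutely continuous function f on ℝ with f' locally integrable, and any x < y, one has |f(y) - f(x)| ≤ |y - x| · (g(x) + g(y)), where g(t) is the Hardy–Littlewood maximal function of |f'| at t. -/
open MeasureTheory intervalIntegral

/-- The Hardy–Littlewood maximal function of `|f'|` on the real line:
supremum over all nondegenerate intervals `[a,b]` containing `t` of the
average of `|f'|` over `[a,b]` (with values in `ℝ≥0∞`). -/
noncomputable def hlMaxLine (f' : ℝ → ℝ) (t : ℝ) : ENNReal :=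
  ⨆ (a : ℝ) (b : ℝ) (_ : a ≤ t) (_ : t ≤ b) (_ : a < b),
    ENNReal.ofReal ((b - a)⁻¹ * ∫ s in a..b, |f' s|)

/-- For an absolutely continuous `f : ℝ → ℝ` (so that the fundamental theorem of
calculus holds with locally integrable derivative `f'`) and `x < y`, one has
`|f y - f x| ≤ |y - x| * (g x + g y)` where `g` is the Hardy–Littlewood maximal
function of `|f'|`. -/
theorem abs_sub_le_mul_add_hlMax
    (f f' : ℝ → ℝ)
    (hloc : LocallyIntegrable f' volume)
    (hftc : ∀ a b : ℝ, a ≤ b → f b - f a = ∫ t in a..b, f' t)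
    (x y : ℝ) (hxy : x < y) :
    ENNReal.ofReal (|f y - f x|) ≤
      ENNReal.ofReal (|y - x|) * (hlMaxLine f' x + hlMaxLine f' y) := by
  have hxy' : (0:ℝ) < y - x := by linarith
  have h1 : |f y - f x| ≤ ∫ t in x..y, |f' t| := by
    rw [hftc x y hxy.le]
    exact intervalIntegral.abs_integral_le_integral_abs hxy.le
  have hgx : ENNReal.ofReal ((y - x)⁻¹ * ∫ t in x..y, |f' t|) ≤ hlMaxLine f' x := by
    unfold hlMaxLine
    exact le_iSup_of_le x (le_iSup_of_le y (le_iSup_of_le le_rfl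
      (le_iSup_of_le hxy.le (le_iSup_of_le hxy le_rfl))))
  calc ENNReal.ofReal |f y - f x|
      ≤ ENNReal.ofReal (∫ t in x..y, |f' t|) := ENNReal.ofReal_le_ofReal h1
    _ = ENNReal.ofReal (|y - x| * ((y - x)⁻¹ * ∫ t in x..y, |f' t|)) := by
        rw [abs_of_pos hxy']; field_simp
    _ = ENNReal.ofReal |y - x| * ENNReal.ofReal ((y - x)⁻¹ * ∫ t in x..y, |f' t|) :=
        ENNReal.ofReal_mul (abs_nonneg _)
    _ ≤ ENNReal.ofReal |y - x| * (hlMaxLine f' x + hlMaxLine f' y) := by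
        gcongr
        exact le_trans hgx le_self_add
end

section
/- Let f ∈ L^1_loc(ℝⁿ). Define MQf(x) = sup_{r>0} (1/|B(x,r)|) ∫_{B(x,r)} |f(z) - f(x)|/|z - x| dz. Then for every pair of points x ≠ y at which MQf is defined (e.g. Lebesgue points), |f(x) - f(y)| ≤ c(n) |x - y| (MQf(x) + MQf(y)), where c(n) = |B(x,r)| / |B(x,r) ∩ B(y,r)| with r = |x - y| is a dimensional constant. -/
/-!
For `z` in the lens `B(x, r) ∩ B(y, r)`, `r = ‖x - y‖`, both `‖z - x‖` and `‖z - y‖` are below `r`,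
so the triangle inequality gives
`|f x - f y| ≤ r (|f z - f x| / ‖z - x‖ + |f z - f y| / ‖z - y‖)`.
Averaging over the lens and enlarging each integral to the full ball bounds `|f x - f y|` by
`r |B(x, r)| / |lens|` times the two ball averages, each at most `MQ`. Translation, dilation and
a reflection moving `(y - x) / r` to a fixed unit vector show that `|B(x, r)| / |lens|` depends
only on the space.
-/

open MeasureTheory Metric

/-- The maximal mean difference quotient
`MQf(x) = sup_{r>0} ⨍_{B(x,r)} |f z - f x| / ‖z - x‖ dz` (with values in `ℝ≥0∞`). -/
noncomputable def MQ {n : ℕ} (f : EuclideanSpace ℝ (Fin n) → ℝ)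
    (x : EuclideanSpace ℝ (Fin n)) : ENNReal :=
  ⨆ (r : ℝ) (_ : 0 < r),
    (volume (ball x r))⁻¹ *
      ∫⁻ z in ball x r, ENNReal.ofReal (|f z - f x| / ‖z - x‖)

open scoped Pointwise

section Lens

variable {E : Type*} [NormedAddCommGroup E]

theorem ball_inter_ball_eq_vadd_smul [NormedSpace ℝ E] (x y : E) {r : ℝ} (hr : 0 < r) :
    ball x r ∩ ball y r = x +ᵥ r • (ball 0 1 ∩ ball (r⁻¹ • (y - x)) 1) := by
  rw [Set.smul_set_inter₀ hr.ne', _root_.smul_ball hr.ne', _root_.smul_ball hr.ne',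
    smul_inv_smul₀ hr.ne', Set.vadd_set_inter, vadd_ball, vadd_ball]
  simp [abs_of_pos hr]

theorem MeasureTheory.Measure.addHaar_ball_inter_ball [NormedSpace ℝ E] [MeasurableSpace E] [BorelSpace E]
    [FiniteDimensional ℝ E] (μ : Measure E) [μ.IsAddHaarMeasure] (x y : E) {r : ℝ} (hr : 0 < r) :
    μ (ball x r ∩ ball y r) =
      ENNReal.ofReal (r ^ Module.finrank ℝ E) * μ (ball 0 1 ∩ ball (r⁻¹ • (y - x)) 1) := by
  rw [ball_inter_ball_eq_vadd_smul x y hr, measure_vadd, Measure.addHaar_smul,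
    abs_of_pos (pow_pos hr _)]

theorem ball_half_smul_subset_ball_inter_ball [NormedSpace ℝ E] {u : E} (hu : ‖u‖ = 1) :
    ball ((2⁻¹ : ℝ) • u) 2⁻¹ ⊆ ball 0 1 ∩ ball u 1 := by
  refine Set.subset_inter (ball_subset_ball' ?_) (ball_subset_ball' ?_)
  · rw [dist_zero_right, norm_smul, hu]; norm_num
  · rw [dist_eq_norm, show (2⁻¹ : ℝ) • u - u = (-2⁻¹ : ℝ) • u by module, norm_smul, hu]
    norm_num

variable [InnerProductSpace ℝ E] [FiniteDimensional ℝ E] [MeasurableSpace E] [BorelSpace E]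

theorem volume_ball_inter_ball_eq_of_norm_eq_one {u v : E} (hu : ‖u‖ = 1) (hv : ‖v‖ = 1) :
    volume (ball 0 1 ∩ ball u 1) = volume (ball (0 : E) 1 ∩ ball v 1) := by
  set A := (ℝ ∙ (u - v))ᗮ.reflection
  have hAu : A u = v := Submodule.reflection_sub (hu.trans hv.symm)
  have hA : ⇑A ⁻¹' (ball 0 1 ∩ ball v 1) = ball 0 1 ∩ ball u 1 := by
    rw [Set.preimage_inter, LinearIsometryEquiv.preimage_ball, LinearIsometryEquiv.preimage_ball,
      map_zero, ← hAu, LinearIsometryEquiv.symm_apply_apply]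
  rw [← hA, A.measurePreserving.measure_preimage
    (measurableSet_ball.inter measurableSet_ball).nullMeasurableSet]

theorem exists_volume_ball_eq_mul_volume_ball_inter_ball [Nontrivial E] :
    ∃ c : ℝ, 0 < c ∧ ∀ x y : E, x ≠ y →
      volume (ball x ‖x - y‖) = ENNReal.ofReal c * volume (ball x ‖x - y‖ ∩ ball y ‖x - y‖) := by
  obtain ⟨u, hu⟩ := exists_norm_eq E zero_le_one
  set L := ball (0 : E) 1 ∩ ball u 1
  have hL0 : volume L ≠ 0 := ((measure_ball_pos volume _ (by norm_num : (0 : ℝ) < 2⁻¹)).trans_le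
    (measure_mono (ball_half_smul_subset_ball_inter_ball hu))).ne'
  have hLtop : volume L ≠ ⊤ := measure_ne_top_of_subset Set.inter_subset_left measure_ball_lt_top.ne
  have hratio : volume (ball (0 : E) 1) / volume L ≠ ⊤ :=
    ENNReal.div_ne_top measure_ball_lt_top.ne hL0
  refine ⟨(volume (ball (0 : E) 1) / volume L).toReal, ENNReal.toReal_pos
    (ENNReal.div_ne_zero.2 ⟨(measure_ball_pos _ _ one_pos).ne', hLtop⟩) hratio, fun x y hxy => ?_⟩
  have hr : 0 < ‖x - y‖ := norm_pos_iff.2 (sub_ne_zero.2 hxy)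
  have hunit : ‖‖x - y‖⁻¹ • (y - x)‖ = 1 := by
    rw [norm_smul, norm_inv, norm_norm, norm_sub_rev y x, inv_mul_cancel₀ hr.ne']
  rw [Measure.addHaar_ball _ _ hr.le, Measure.addHaar_ball_inter_ball _ _ _ hr,
    volume_ball_inter_ball_eq_of_norm_eq_one hunit hu, ENNReal.ofReal_toReal hratio, mul_left_comm,
    ENNReal.div_mul_cancel hL0 hLtop]

end Lens

section DifferenceQuotient

variable {E : Type*} [NormedAddCommGroup E] (f : E → ℝ)

theorem abs_sub_le_mul_abs_sub_div_norm_sub {z w : E} {r : ℝ} (h : ‖z - w‖ ≤ r) :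
    |f z - f w| ≤ r * (|f z - f w| / ‖z - w‖) := by
  rcases eq_or_ne z w with rfl | hzw
  · simp
  calc |f z - f w| = ‖z - w‖ * (|f z - f w| / ‖z - w‖) :=
        (mul_div_cancel₀ _ (norm_ne_zero_iff.2 (sub_ne_zero.2 hzw))).symm
    _ ≤ r * (|f z - f w| / ‖z - w‖) := by gcongr

theorem ofReal_abs_sub_mul_measure_ball_inter_ball_le [MeasurableSpace E] [BorelSpace E]
    {μ : Measure E} (hf : AEMeasurable f μ) (x y : E) {r : ℝ} (hr : 0 ≤ r) :
    ENNReal.ofReal |f x - f y| * μ (ball x r ∩ ball y r) ≤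
      ENNReal.ofReal r * (∫⁻ z in ball x r, ENNReal.ofReal (|f z - f x| / ‖z - x‖) ∂μ +
        ∫⁻ z in ball y r, ENNReal.ofReal (|f z - f y| / ‖z - y‖) ∂μ) := by
  set g : E → E → ENNReal := fun w z => ENNReal.ofReal (|f z - f w| / ‖z - w‖)
  have hg : AEMeasurable (g x) (μ.restrict (ball x r ∩ ball y r)) := by
    have hf' := hf.restrict (s := ball x r ∩ ball y r)
    fun_prop
  have hpt : ∀ z ∈ ball x r ∩ ball y r,
      ENNReal.ofReal |f x - f y| ≤ ENNReal.ofReal r * g x z + ENNReal.ofReal r * g y z := by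
    rintro z ⟨hzx, hzy⟩
    rw [← ENNReal.ofReal_mul hr, ← ENNReal.ofReal_mul hr]
    refine (ENNReal.ofReal_le_ofReal ?_).trans ENNReal.ofReal_add_le
    calc |f x - f y| ≤ |f z - f x| + |f z - f y| := abs_sub_comm (f x) (f z) ▸ abs_sub_le _ _ _
      _ ≤ _ := add_le_add (abs_sub_le_mul_abs_sub_div_norm_sub f (mem_ball_iff_norm.1 hzx).le)
        (abs_sub_le_mul_abs_sub_div_norm_sub f (mem_ball_iff_norm.1 hzy).le)
  calc ENNReal.ofReal |f x - f y| * μ (ball x r ∩ ball y r)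
      = ∫⁻ _ in ball x r ∩ ball y r, ENNReal.ofReal |f x - f y| ∂μ := (setLIntegral_const _ _).symm
    _ ≤ ∫⁻ z in ball x r ∩ ball y r, ENNReal.ofReal r * g x z + ENNReal.ofReal r * g y z ∂μ :=
        setLIntegral_mono' (measurableSet_ball.inter measurableSet_ball) hpt
    _ = ENNReal.ofReal r * (∫⁻ z in ball x r ∩ ball y r, g x z ∂μ +
          ∫⁻ z in ball x r ∩ ball y r, g y z ∂μ) := by
        rw [lintegral_add_left' (hg.const_mul _), lintegral_const_mul' _ _ ENNReal.ofReal_ne_top,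
          lintegral_const_mul' _ _ ENNReal.ofReal_ne_top, mul_add]
    _ ≤ _ := by
        gcongr
        · exact Set.inter_subset_left
        · exact Set.inter_subset_right

end DifferenceQuotient

section MQ

variable {n : ℕ} (f : EuclideanSpace ℝ (Fin n) → ℝ)

theorem setLIntegral_ball_le_mul_MQ (x : EuclideanSpace ℝ (Fin n)) {r : ℝ} (hr : 0 < r) :
    ∫⁻ z in ball x r, ENNReal.ofReal (|f z - f x| / ‖z - x‖) ≤ volume (ball x r) * MQ f x := by
  rw [← ENNReal.inv_mul_le_iff (measure_ball_pos _ _ hr).ne' measure_ball_lt_top.ne]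
  exact le_iSup₂_of_le (f := fun (ρ : ℝ) (_ : 0 < ρ) => (volume (ball x ρ))⁻¹ *
    ∫⁻ z in ball x ρ, ENNReal.ofReal (|f z - f x| / ‖z - x‖)) r hr le_rfl

theorem ofReal_abs_sub_le_mul_MQ_add_MQ (hf : AEMeasurable f) {x y : EuclideanSpace ℝ (Fin n)}
    (hxy : x ≠ y) {c : ℝ}
    (hc : volume (ball x ‖x - y‖) = ENNReal.ofReal c * volume (ball x ‖x - y‖ ∩ ball y ‖x - y‖)) :
    ENNReal.ofReal |f x - f y| ≤ ENNReal.ofReal (c * ‖x - y‖) * (MQ f x + MQ f y) := by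
  set r := ‖x - y‖
  have hr : 0 < r := norm_pos_iff.2 (sub_ne_zero.2 hxy)
  have hL0 : volume (ball x r ∩ ball y r) ≠ 0 := fun h =>
    (measure_ball_pos volume x hr).ne' (by rw [hc, h, mul_zero])
  have hLtop : volume (ball x r ∩ ball y r) ≠ ⊤ :=
    measure_ne_top_of_subset Set.inter_subset_left measure_ball_lt_top.ne
  have hball : volume (ball y r) = volume (ball x r) := by
    rw [Measure.addHaar_ball_center, Measure.addHaar_ball_center volume x]
  rw [← ENNReal.mul_le_mul_iff_left hL0 hLtop]
  calc ENNReal.ofReal |f x - f y| * volume (ball x r ∩ ball y r)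
      ≤ ENNReal.ofReal r * ((∫⁻ z in ball x r, ENNReal.ofReal (|f z - f x| / ‖z - x‖)) +
          ∫⁻ z in ball y r, ENNReal.ofReal (|f z - f y| / ‖z - y‖)) :=
        ofReal_abs_sub_mul_measure_ball_inter_ball_le f hf x y hr.le
    _ ≤ ENNReal.ofReal r * (volume (ball x r) * MQ f x + volume (ball y r) * MQ f y) := by
        gcongr <;> exact setLIntegral_ball_le_mul_MQ f _ hr
    _ = ENNReal.ofReal (c * r) * (MQ f x + MQ f y) * volume (ball x r ∩ ball y r) := by
        rw [hball, hc, ENNReal.ofReal_mul' hr.le]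
        ring

end MQ

/-- There is a dimensional constant `c(n)`, namely the ratio
`|B(x,r)| / |B(x,r) ∩ B(y,r)|` with `r = ‖x - y‖`, such that for every locally
integrable `f` and all `x ≠ y`,
`|f x - f y| ≤ c(n) ‖x - y‖ (MQf(x) + MQf(y))`. -/
theorem pointwise_sobolev_ineq_MQ {n : ℕ} (hn : 0 < n) :
    ∃ c : ℝ, 0 < c ∧
      (∀ x y : EuclideanSpace ℝ (Fin n), x ≠ y →
        volume (ball x ‖x - y‖) =
          ENNReal.ofReal c * volume (ball x ‖x - y‖ ∩ ball y ‖x - y‖)) ∧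
      ∀ f : EuclideanSpace ℝ (Fin n) → ℝ, LocallyIntegrable f volume →
        ∀ x y : EuclideanSpace ℝ (Fin n), x ≠ y →
          ENNReal.ofReal |f x - f y| ≤
            ENNReal.ofReal (c * ‖x - y‖) * (MQ f x + MQ f y) := by
  have : NeZero n := ⟨hn.ne'⟩
  obtain ⟨c, hc, hlens⟩ :=
    exists_volume_ball_eq_mul_volume_ball_inter_ball (E := EuclideanSpace ℝ (Fin n))
  exact ⟨c, hc, hlens, fun f hf x y hxy =>
    ofReal_abs_sub_le_mul_MQ_add_MQ f hf.aestronglyMeasurable.aemeasurable hxy (hlens x y hxy)⟩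
end

section
/- Let f ∈ L^p_loc(ℝⁿ) and g ∈ L^p_loc(ℝⁿ), g ≥ 0, satisfy |f(x) - f(y)| ≤ |x - y|(g(x) + g(y)) for a.e. x, y ∈ ℝⁿ. Then for a.e. x, MQf(x) ≤ g(x) + Mg(x) ≤ 2 Mg(x), where MQf is the maximal mean difference quotient and Mg is the Hardy–Littlewood maximal function of g. -/
open MeasureTheory Metric Filter Topology

noncomputable def hlMax {n : ℕ} (g : EuclideanSpace ℝ (Fin n) → ℝ)
    (x : EuclideanSpace ℝ (Fin n)) : ENNReal :=
  ⨆ (r : ℝ) (_ : 0 < r),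
    (volume (ball x r))⁻¹ * ∫⁻ z in ball x r, ENNReal.ofReal |g z|

theorem locallyIntegrable_of_forall_isCompact_memLp {X ε : Type*} [TopologicalSpace X]
    [LocallyCompactSpace X] [MeasurableSpace X] {μ : Measure X} [IsFiniteMeasureOnCompacts μ]
    [NormedAddCommGroup ε] {f : X → ε} {p : ENNReal} (hp : 1 ≤ p)
    (hf : ∀ K : Set X, IsCompact K → MemLp f p (μ.restrict K)) : LocallyIntegrable f μ := by
  refine locallyIntegrable_iff.2 fun K hK => ?_
  have : IsFiniteMeasure (μ.restrict K) := ⟨by simpa using hK.measure_lt_top⟩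
  exact (hf K hK).integrable hp

theorem ball_ae_eq_closedBall {E : Type*} [NormedAddCommGroup E] [NormedSpace ℝ E]
    [MeasurableSpace E] [BorelSpace E] [FiniteDimensional ℝ E] (μ : Measure E)
    [μ.IsAddHaarMeasure] (x : E) {r : ℝ} (hr : r ≠ 0) : ball x r =ᵐ[μ] closedBall x r := by
  refine ae_eq_set.2 ⟨?_, ?_⟩
  · simp [Set.sdiff_eq_empty.2 ball_subset_closedBall]
  · rw [closedBall_sdiff_ball]
    exact Measure.addHaar_sphere_of_ne_zero μ x hr

section MaximalFunctions

variable {n : ℕ} {f g : EuclideanSpace ℝ (Fin n) → ℝ} {x : EuclideanSpace ℝ (Fin n)}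

theorem ballAverage_le_hlMax {r : ℝ} (hr : 0 < r) :
    (volume (ball x r))⁻¹ * ∫⁻ z in ball x r, ENNReal.ofReal |g z| ≤ hlMax g x :=
  le_iSup₂ (f := fun (r : ℝ) (_ : 0 < r) =>
    (volume (ball x r))⁻¹ * ∫⁻ z in ball x r, ENNReal.ofReal |g z|) r hr

theorem ofReal_average_closedBall_abs_le_hlMax {r : ℝ}
    (hg : IntegrableOn g (closedBall x r) volume) (hr : 0 < r) :
    ENNReal.ofReal (⨍ z in closedBall x r, |g z|) ≤ hlMax g x := by
  have hball := ball_ae_eq_closedBall volume x hr.ne'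
  rw [ofReal_setAverage hg.abs
    (Eventually.of_forall fun z => abs_nonneg (g z)), ← measure_congr hball,
    ← setLIntegral_congr hball, ENNReal.div_eq_inv_mul]
  exact ballAverage_le_hlMax hr

theorem ae_ofReal_abs_le_hlMax (hg : LocallyIntegrable g volume) :
    ∀ᵐ x, ENNReal.ofReal |g x| ≤ hlMax g x := by
  have hg_abs : LocallyIntegrable (fun z => |g z|) volume := fun z => (hg z).norm
  filter_upwards [IsUnifLocDoublingMeasure.ae_tendsto_average volume hg_abs 1] with x hx
  have hlim : Tendsto (fun r => ⨍ z in closedBall x r, |g z|) (𝓝[>] 0) (𝓝 |g x|) :=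
    hx (fun _ => x) id tendsto_id <| eventually_nhdsWithin_of_forall fun r hr =>
      mem_closedBall_self (by simpa using le_of_lt hr)
  refine le_of_tendsto ((ENNReal.continuous_ofReal.tendsto _).comp hlim) ?_
  filter_upwards [self_mem_nhdsWithin] with r hr
  exact ofReal_average_closedBall_abs_le_hlMax
    (hg.integrableOn_isCompact (isCompact_closedBall x r)) hr

theorem ofReal_abs_sub_div_norm_le {z : EuclideanSpace ℝ (Fin n)}
    (h : |f x - f z| ≤ ‖x - z‖ * (g x + g z)) :
    ENNReal.ofReal (|f z - f x| / ‖z - x‖) ≤ ENNReal.ofReal (g x) + ENNReal.ofReal |g z| := by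
  rcases eq_or_ne z x with rfl | hzx
  · simp -- the quotient is `0 / 0 = 0`
  have hquot : |f z - f x| / ‖z - x‖ ≤ g x + g z := by
    rw [div_le_iff₀ (norm_pos_iff.2 (sub_ne_zero.2 hzx)), abs_sub_comm, norm_sub_rev, mul_comm]
    exact h
  calc ENNReal.ofReal (|f z - f x| / ‖z - x‖) ≤ ENNReal.ofReal (g x + g z) :=
        ENNReal.ofReal_le_ofReal hquot
    _ ≤ ENNReal.ofReal (g x) + ENNReal.ofReal (g z) := ENNReal.ofReal_add_le
    _ ≤ ENNReal.ofReal (g x) + ENNReal.ofReal |g z| := by gcongr; exact le_abs_self _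

theorem MQ_le_of_ae_abs_sub_le (h : ∀ᵐ z, |f x - f z| ≤ ‖x - z‖ * (g x + g z)) :
    MQ f x ≤ ENNReal.ofReal (g x) + hlMax g x := by
  refine iSup₂_le fun r hr => ?_
  have hvol : volume (ball x r) ≠ 0 := (measure_ball_pos volume x hr).ne'
  have hint : ∫⁻ z in ball x r, ENNReal.ofReal (|f z - f x| / ‖z - x‖) ≤
      ENNReal.ofReal (g x) * volume (ball x r) + ∫⁻ z in ball x r, ENNReal.ofReal |g z| := by
    rw [← setLIntegral_const, ← lintegral_add_left measurable_const]
    exact lintegral_mono_ae (ae_restrict_of_ae (h.mono fun z => ofReal_abs_sub_div_norm_le))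
  calc (volume (ball x r))⁻¹ * ∫⁻ z in ball x r, ENNReal.ofReal (|f z - f x| / ‖z - x‖)
      ≤ (volume (ball x r))⁻¹ * (ENNReal.ofReal (g x) * volume (ball x r) +
          ∫⁻ z in ball x r, ENNReal.ofReal |g z|) := by gcongr
    _ = ENNReal.ofReal (g x) +
          (volume (ball x r))⁻¹ * ∫⁻ z in ball x r, ENNReal.ofReal |g z| := by
      rw [mul_add, mul_left_comm, ENNReal.inv_mul_cancel hvol measure_ball_lt_top.ne, mul_one]
    _ ≤ ENNReal.ofReal (g x) + hlMax g x := by gcongr; exact ballAverage_le_hlMax hr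

end MaximalFunctions

theorem MQ_le_add_hlMax_general {n : ℕ} (p : ℝ) (hp : 1 ≤ p)
    (f g : EuclideanSpace ℝ (Fin n) → ℝ)
    (hg : ∀ K : Set (EuclideanSpace ℝ (Fin n)), IsCompact K →
        MemLp g (ENNReal.ofReal p) (volume.restrict K))
    (hg_nonneg : ∀ x, 0 ≤ g x)
    (hineq : ∀ᵐ q : EuclideanSpace ℝ (Fin n) × EuclideanSpace ℝ (Fin n),
        |f q.1 - f q.2| ≤ ‖q.1 - q.2‖ * (g q.1 + g q.2)) :
    ∀ᵐ x,
      MQ f x ≤ ENNReal.ofReal (g x) + hlMax g x ∧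
      ENNReal.ofReal (g x) + hlMax g x ≤ 2 * hlMax g x := by
  have hg_loc : LocallyIntegrable g volume :=
    locallyIntegrable_of_forall_isCompact_memLp (ENNReal.one_le_ofReal.2 hp) hg
  filter_upwards [ae_ofReal_abs_le_hlMax hg_loc, Measure.ae_ae_of_ae_prod hineq]
    with x hg_le hineq_x
  rw [abs_of_nonneg (hg_nonneg x)] at hg_le
  exact ⟨MQ_le_of_ae_abs_sub_le hineq_x, by rw [two_mul]; gcongr⟩

/-- If a nonnegative `g ∈ L^p_loc` is a Sobolev metric gradient of `f ∈ L^p_loc`, i.e.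
`|f x - f y| ≤ ‖x - y‖ (g x + g y)` for a.e. pair `(x,y)`, then for a.e. `x`,
`MQf(x) ≤ g(x) + Mg(x) ≤ 2 Mg(x)`. -/
theorem MQ_le_add_hlMax {n : ℕ} (p : ℝ) (hp : 1 ≤ p)
    (f g : EuclideanSpace ℝ (Fin n) → ℝ)
    (hf : ∀ K : Set (EuclideanSpace ℝ (Fin n)), IsCompact K →
        MemLp f (ENNReal.ofReal p) (volume.restrict K))
    (hg : ∀ K : Set (EuclideanSpace ℝ (Fin n)), IsCompact K →
        MemLp g (ENNReal.ofReal p) (volume.restrict K))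
    (hg_nonneg : ∀ x, 0 ≤ g x)
    (hineq : ∀ᵐ q : EuclideanSpace ℝ (Fin n) × EuclideanSpace ℝ (Fin n),
        |f q.1 - f q.2| ≤ ‖q.1 - q.2‖ * (g q.1 + g q.2)) :
    ∀ᵐ x,
      MQ f x ≤ ENNReal.ofReal (g x) + hlMax g x ∧
      ENNReal.ofReal (g x) + hlMax g x ≤ 2 * hlMax g x :=
  MQ_le_add_hlMax_general p hp f g hg hg_nonneg hineq
end

section
/- For f ∈ C^1(ℝⁿ), x ∈ ℝⁿ and r > 0, the averaged difference quotient satisfies avg_{B(x,r)} |f(z) − f(x)|/|z − x| dz ≤ ∫_0^1 avg_{B(x,tr)} |∇f(ζ)| dζ dt. -/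
/-!
By the fundamental theorem of calculus along the segment from `x` to `z`, the difference quotient
is at most `∫₀¹ ‖Df(x + t(z - x))‖ dt`. Average this over `z ∈ B(x, r)` and swap the two
integrals, which is legitimate because the integrand is continuous in `(z, t)`. For `t > 0` the
homothety `z ↦ x + t(z - x)` maps `B(x, r)` onto `B(x, tr)` with Jacobian `tⁿ`. The same factor
`tⁿ` is the ratio of the volumes of the two balls, so the homothety preserves averages.
-/

open MeasureTheory Metric Set

section

open AffineMap

theorem norm_sub_le_integral_norm_fderiv_lineMap_mul
    {E F : Type*} [NormedAddCommGroup E] [NormedSpace ℝ E]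
    [NormedAddCommGroup F] [NormedSpace ℝ F] [CompleteSpace F]
    {f : E → F} (hf : ContDiff ℝ 1 f) (x z : E) :
    ‖f z - f x‖ ≤ (∫ t in (0:ℝ)..1, ‖fderiv ℝ f (lineMap x z t)‖) * ‖z - x‖ := by
  have hf' : Continuous (fderiv ℝ f) := hf.continuous_fderiv one_ne_zero
  have hline : Continuous (lineMap x z : ℝ → E) := lineMap_continuous
  have hderiv (t : ℝ) : HasDerivAt (fun s => f (lineMap x z s))
      (fderiv ℝ f (lineMap x z t) (z - x)) t :=
    (hf.differentiable one_ne_zero _).hasFDerivAt.comp_hasDerivAt t hasDerivAt_lineMap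
  have hftc : f z - f x = ∫ t in (0:ℝ)..1, fderiv ℝ f (lineMap x z t) (z - x) := by
    rw [intervalIntegral.integral_eq_sub_of_hasDerivAt (fun t _ => hderiv t)
      (((hf'.comp hline).clm_apply continuous_const).intervalIntegrable 0 1)]
    simp
  calc ‖f z - f x‖ ≤ ∫ t in (0:ℝ)..1, ‖fderiv ℝ f (lineMap x z t) (z - x)‖ := by
        rw [hftc]
        exact intervalIntegral.norm_integral_le_integral_norm zero_le_one
    _ ≤ ∫ t in (0:ℝ)..1, ‖fderiv ℝ f (lineMap x z t)‖ * ‖z - x‖ := by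
        refine intervalIntegral.integral_mono_on zero_le_one ?_ ?_
          fun t _ => (fderiv ℝ f _).le_opNorm _
        · exact ((hf'.comp hline).clm_apply continuous_const).norm.intervalIntegrable 0 1
        · exact ((hf'.comp hline).norm.mul continuous_const).intervalIntegrable 0 1
    _ = (∫ t in (0:ℝ)..1, ‖fderiv ℝ f (lineMap x z t)‖) * ‖z - x‖ :=
        intervalIntegral.integral_mul_const _ _

theorem image_homothety_ball {E : Type*} [NormedAddCommGroup E] [NormedSpace ℝ E]
    (x : E) {t : ℝ} (ht : 0 < t) (r : ℝ) : homothety x t '' ball x r = ball x (t * r) := by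
  ext w
  constructor
  · rintro ⟨z, hz, rfl⟩
    rw [mem_ball, dist_homothety_center, Real.norm_of_nonneg ht.le, dist_comm]
    exact mul_lt_mul_of_pos_left hz ht
  · intro hw
    refine ⟨homothety x t⁻¹ w, ?_, ?_⟩
    · rw [mem_ball, dist_homothety_center, Real.norm_of_nonneg (inv_nonneg.2 ht.le), dist_comm,
        inv_mul_lt_iff₀ ht]
      exact hw
    · rw [← comp_apply, ← homothety_mul, mul_inv_cancel₀ ht.ne', homothety_one, id_apply]

theorem setAverage_comp_homothety {E F : Type*} [NormedAddCommGroup E] [NormedSpace ℝ E]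
    [FiniteDimensional ℝ E] [MeasurableSpace E] [BorelSpace E] (μ : Measure E)
    [μ.IsAddHaarMeasure] [NormedAddCommGroup F] [NormedSpace ℝ F]
    (g : E → F) (x : E) {t : ℝ} (ht : t ≠ 0) {s : Set E} (hs : MeasurableSet s) :
    ⨍ z in s, g (homothety x t z) ∂μ = ⨍ ζ in homothety x t '' s, g ζ ∂μ := by
  have hderiv (z : E) : HasFDerivAt (homothety x t) (t • ContinuousLinearMap.id ℝ E) z := by
    rw [coe_homothety]
    exact (((hasFDerivAt_id z).sub_const x).const_smul t).add_const x
  have hdet : |(t • ContinuousLinearMap.id ℝ E).det| = |t ^ Module.finrank ℝ E| := by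
    simp [ContinuousLinearMap.det]
  rw [setAverage_eq, setAverage_eq, integral_image_eq_integral_abs_det_fderiv_smul μ hs
    (fun z _ => (hderiv z).hasFDerivWithinAt) (homothety_injective x ht).injOn, hdet,
    integral_smul, smul_smul, measureReal_def, measureReal_def,
    Measure.addHaar_image_homothety, ENNReal.toReal_mul, ENNReal.toReal_ofReal (abs_nonneg _),
    mul_inv_rev, inv_mul_cancel_right₀ (by positivity)]

end

section

variable {α F : Type*} [MetricSpace α] [ProperSpace α] [MeasurableSpace α]
  [OpensMeasurableSpace α] {μ : Measure α} [IsFiniteMeasureOnCompacts μ]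
  [NormedAddCommGroup F]

theorem Continuous.integrable_restrict_prod_restrict_Ioc {G : α × ℝ → F} (hG : Continuous G)
    {s : Set α} (hs : Bornology.IsBounded s) (a b : ℝ) :
    Integrable G ((μ.restrict s).prod (volume.restrict (Ioc a b))) := by
  rw [Measure.prod_restrict]
  exact (hG.continuousOn.integrableOn_compact
    (hs.isCompact_closure.prod (isCompact_Icc (a := a) (b := b)))).mono_set
    (prod_mono subset_closure Ioc_subset_Icc_self)

theorem setAverage_intervalIntegral_comm [NormedSpace ℝ F] [CompleteSpace F] {G : α → ℝ → F}
    (hG : Continuous (Function.uncurry G)) {s : Set α} (hs : Bornology.IsBounded s) {a b : ℝ}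
    (hab : a ≤ b) :
    ⨍ z in s, (∫ t in a..b, G z t) ∂μ = ∫ t in a..b, ⨍ z in s, G z t ∂μ := by
  simp only [setAverage_eq, intervalIntegral.integral_of_le hab, integral_smul]
  rw [integral_integral_swap (hG.integrable_restrict_prod_restrict_Ioc hs a b)]

end

-- `f` need not be integrable: its integral is then `0`.
theorem average_mono_of_nonneg {α : Type*} [MeasurableSpace α] {μ : Measure α} {f g : α → ℝ}
    (hf : 0 ≤ᵐ[μ] f) (hg : Integrable g μ) (hfg : f ≤ᵐ[μ] g) :
    ⨍ a, f a ∂μ ≤ ⨍ a, g a ∂μ := by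
  simp only [average_eq, smul_eq_mul]
  exact mul_le_mul_of_nonneg_left (integral_mono_of_nonneg hf hg hfg) (by positivity)

theorem avg_diff_quotient_le_general {n : ℕ}
    (f : EuclideanSpace ℝ (Fin n) → ℝ) (hf : ContDiff ℝ 1 f)
    (x : EuclideanSpace ℝ (Fin n)) (r : ℝ) :
    ⨍ z in ball x r, |f z - f x| / ‖z - x‖ ∂volume ≤
      ∫ t in (0:ℝ)..1, ⨍ ζ in ball x (t * r), ‖gradient f ζ‖ ∂volume := by
  set G : EuclideanSpace ℝ (Fin n) → ℝ → ℝ := fun z t => ‖fderiv ℝ f (AffineMap.homothety x t z)‖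
  have hG : Continuous (Function.uncurry G) := by
    refine ((hf.continuous_fderiv one_ne_zero).comp ?_).norm
    simp only [AffineMap.coe_homothety, vsub_eq_sub, vadd_eq_add]
    fun_prop
  have hquotient (z) : |f z - f x| / ‖z - x‖ ≤ ∫ t in (0:ℝ)..1, G z t := by
    simp only [G, AffineMap.homothety_eq_lineMap, ← Real.norm_eq_abs]
    exact div_le_of_le_mul₀ (norm_nonneg _)
      (intervalIntegral.integral_nonneg zero_le_one fun _ _ => norm_nonneg _)
      (norm_sub_le_integral_norm_fderiv_lineMap_mul hf x z)
  have hgrad (ζ) : ‖gradient f ζ‖ = ‖fderiv ℝ f ζ‖ := by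
    rw [← toDual_gradient, LinearIsometryEquiv.norm_map]
  calc ⨍ z in ball x r, |f z - f x| / ‖z - x‖ ∂volume
      ≤ ⨍ z in ball x r, (∫ t in (0:ℝ)..1, G z t) ∂volume := by
        refine average_mono_of_nonneg (.of_forall fun z => by positivity) ?_
          (.of_forall hquotient)
        exact ((intervalIntegral.continuous_parametric_intervalIntegral_of_continuous' hG 0 1
          ).continuousOn.integrableOn_compact (isCompact_closedBall x r)).mono_set
          ball_subset_closedBall
    _ = ∫ t in (0:ℝ)..1, ⨍ z in ball x r, G z t ∂volume :=
        setAverage_intervalIntegral_comm hG isBounded_ball zero_le_one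
    _ = ∫ t in (0:ℝ)..1, ⨍ ζ in ball x (t * r), ‖gradient f ζ‖ ∂volume := by
        -- only for `t ∈ (0, 1]`: at `t = 0` the left side is `‖Df(x)‖` and the ball is empty
        refine intervalIntegral.integral_congr_ae (.of_forall fun t ht => ?_)
        rw [uIoc_of_le zero_le_one] at ht
        simp only [G, hgrad]
        rw [setAverage_comp_homothety volume (fun ζ => ‖fderiv ℝ f ζ‖) x ht.1.ne'
          measurableSet_ball, image_homothety_ball x ht.1]

/-- For `f ∈ C¹(ℝⁿ)`, `x ∈ ℝⁿ` and `r > 0`, the averaged difference quotient satisfies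
`⨍_{B(x,r)} |f z - f x| / ‖z - x‖ dz ≤ ∫_0^1 ⨍_{B(x,tr)} ‖∇f(ζ)‖ dζ dt`. -/
theorem avg_diff_quotient_le {n : ℕ} (hn : 0 < n)
    (f : EuclideanSpace ℝ (Fin n) → ℝ) (hf : ContDiff ℝ 1 f)
    (x : EuclideanSpace ℝ (Fin n)) (r : ℝ) (hr : 0 < r) :
    ⨍ z in ball x r, |f z - f x| / ‖z - x‖ ∂volume ≤
      ∫ t in (0:ℝ)..1, ⨍ ζ in ball x (t * r), ‖gradient f ζ‖ ∂volume :=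
  avg_diff_quotient_le_general f hf x r
end

section
/- For f ∈ C^1(ℝⁿ) (or f ∈ W^{1,p}_loc(ℝⁿ)) and every x ∈ ℝⁿ, MQf(x) ≤ 𝕄(|∇f|)(x), where MQf is the maximal mean difference quotient and 𝕄 is the centered Hardy–Littlewood maximal operator. -/
/-!
Along the segment from `x` to `z`, the fundamental theorem of calculus gives
`|f z - f x| / ‖z - x‖ ≤ ∫₀¹ ‖∇f (x + t (z - x))‖ dt`. Average this over `B(x, r)` and exchange
the two integrals: for fixed `t`, the homothety `z ↦ x + t (z - x)` of ratio `t` maps `B(x, r)`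
onto `B(x, t r)`, so the inner average is the average of `‖∇f‖` over `B(x, t r)`, which is at most
`𝕄(‖∇f‖)(x)`. Integrating over `t ∈ (0, 1]` gives the bound.
-/

open MeasureTheory Metric

open Set
open AffineMap (homothety lineMap)
open scoped ENNReal

section Segment
variable {E F : Type*} [NormedAddCommGroup E] [NormedSpace ℝ E]
  [NormedAddCommGroup F] [NormedSpace ℝ F]

theorem norm_sub_le_integral_norm_fderiv_lineMap {f : E → F} (hf : ContDiff ℝ 1 f) (x z : E) :
    ‖f z - f x‖ ≤ ∫ t in (0 : ℝ)..1, ‖fderiv ℝ f (lineMap x z t)‖ * ‖z - x‖ := by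
  have hderiv (t : ℝ) : HasDerivAt (fun s : ℝ => f (lineMap x z s))
      (fderiv ℝ f (lineMap x z t) (z - x)) t :=
    (hf.differentiable one_ne_zero _).hasFDerivAt.comp_hasDerivAt t
      (AffineMap.hasDerivAt_lineMap (a := x) (b := z) (x := t))
  have hcont : Continuous fun t : ℝ => ‖fderiv ℝ f (lineMap x z t)‖ * ‖z - x‖ :=
    ((hf.continuous_fderiv one_ne_zero).comp AffineMap.lineMap_continuous).norm.mul
      continuous_const
  simpa using norm_sub_le_integral_of_norm_deriv_le_of_le zero_le_one
    (fun t _ => (hderiv t).continuousAt.continuousWithinAt)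
    (fun t _ => (hderiv t).differentiableAt.differentiableWithinAt)
    (Filter.Eventually.of_forall fun t _ => (hderiv t).deriv ▸ ContinuousLinearMap.le_opNorm _ _)
    (hcont.intervalIntegrable 0 1)

theorem ofReal_norm_sub_div_le_lintegral_enorm_fderiv_lineMap {f : E → F} (hf : ContDiff ℝ 1 f)
    (x z : E) :
    ENNReal.ofReal (‖f z - f x‖ / ‖z - x‖) ≤
      ∫⁻ t in Ioc (0 : ℝ) 1, ‖fderiv ℝ f (lineMap x z t)‖ₑ := by
  rcases eq_or_ne z x with rfl | hzx
  · simp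
  have hcont : Continuous fun t : ℝ => ‖fderiv ℝ f (lineMap x z t)‖ :=
    ((hf.continuous_fderiv one_ne_zero).comp AffineMap.lineMap_continuous).norm
  have hquot :
      ‖f z - f x‖ / ‖z - x‖ ≤ ∫ t in (0 : ℝ)..1, ‖fderiv ℝ f (lineMap x z t)‖ := by
    rw [div_le_iff₀ (norm_pos_iff.2 (sub_ne_zero.2 hzx)), ← intervalIntegral.integral_mul_const]
    exact norm_sub_le_integral_norm_fderiv_lineMap hf x z
  refine (ENNReal.ofReal_le_ofReal hquot).trans_eq ?_
  rw [intervalIntegral.integral_of_le zero_le_one, ofReal_integral_eq_lintegral_ofReal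
    hcont.integrableOn_Ioc (Filter.Eventually.of_forall fun _ => norm_nonneg _)]
  simp only [ofReal_norm]

end Segment

section Homothety
variable {E : Type*} [NormedAddCommGroup E] [NormedSpace ℝ E] [FiniteDimensional ℝ E]
  [MeasurableSpace E] [BorelSpace E] (μ : Measure E) [μ.IsAddHaarMeasure]

theorem map_homothety_addHaar (x : E) {t : ℝ} (ht : t ≠ 0) :
    Measure.map (homothety x t) μ =
      ENNReal.ofReal |(t ^ Module.finrank ℝ E)⁻¹| • μ := by
  have : ⇑(homothety x t) = (· + x) ∘ (t • ·) ∘ (· - x) := by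
    funext z; simp [AffineMap.homothety_apply]
  rw [this, ← Measure.map_map (by fun_prop) (by fun_prop),
    ← Measure.map_map (by fun_prop) (by fun_prop), map_sub_right_eq_self,
    Measure.map_addHaar_smul μ ht, Measure.map_smul, map_add_right_eq_self]

theorem setLAverage_ball_comp_homothety {g : E → ℝ≥0∞} (hg : Measurable g) (x : E) (r : ℝ)
    {t : ℝ} (ht : 0 < t) :
    ⨍⁻ z in ball x r, g (homothety x t z) ∂μ = ⨍⁻ w in ball x (t * r), g w ∂μ := by
  set h := homothety x t
  have hh : Measurable h := (AffineMap.homothety_continuous x t).measurable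
  have hpre : h ⁻¹' ball x (t * r) = ball x r := by
    ext z
    simp [h, abs_of_pos ht, dist_comm, mul_lt_mul_iff_right₀ ht]
  set c := ENNReal.ofReal |(t ^ Module.finrank ℝ E)⁻¹|
  have hc : c ≠ 0 := by simp [c, ht.ne']
  have hvol : μ (ball x r) = c * μ (ball x (t * r)) := by
    rw [← hpre, ← Measure.map_apply hh measurableSet_ball, map_homothety_addHaar μ x ht.ne',
      Measure.smul_apply, smul_eq_mul]
  have hint : ∫⁻ z in ball x r, g (h z) ∂μ = c * ∫⁻ w in ball x (t * r), g w ∂μ := by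
    rw [← lintegral_map hg hh, ← hpre, ← Measure.restrict_map hh measurableSet_ball,
      map_homothety_addHaar μ x ht.ne', Measure.restrict_smul, lintegral_smul_measure, smul_eq_mul]
  rw [setLAverage_eq, setLAverage_eq, hvol, hint,
    ENNReal.mul_div_mul_left _ _ hc ENNReal.ofReal_ne_top]

theorem setLAverage_ball_lintegral_lineMap_le {g : E → ℝ≥0∞} (hg : Measurable g) {x : E}
    {M : ℝ≥0∞} (hM : ∀ s > 0, ⨍⁻ w in ball x s, g w ∂μ ≤ M) {r : ℝ} (hr : 0 < r) :
    ⨍⁻ z in ball x r, (∫⁻ t in Ioc (0 : ℝ) 1, g (lineMap x z t)) ∂μ ≤ M := calc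
  _ = ∫⁻ t in Ioc (0 : ℝ) 1, (⨍⁻ z in ball x r, g (homothety x t z) ∂μ) := by
    simp_rw [AffineMap.homothety_eq_lineMap]
    exact lintegral_lintegral_swap
      (hg.comp (continuous_const.lineMap continuous_fst continuous_snd).measurable).aemeasurable
  _ = ∫⁻ t in Ioc (0 : ℝ) 1, (⨍⁻ w in ball x (t * r), g w ∂μ) :=
    setLIntegral_congr_fun measurableSet_Ioc fun t ht =>
      setLAverage_ball_comp_homothety μ hg x r ht.1
  _ ≤ ∫⁻ _ in Ioc (0 : ℝ) 1, M :=
    setLIntegral_mono' measurableSet_Ioc fun t ht => hM _ (mul_pos ht.1 hr)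
  _ = M := by simp

end Homothety

theorem norm_gradient {𝕜 F : Type*} [RCLike 𝕜] [NormedAddCommGroup F] [InnerProductSpace 𝕜 F]
    [CompleteSpace F] (f : F → 𝕜) (x : F) : ‖gradient f x‖ = ‖fderiv 𝕜 f x‖ := by
  rw [← toDual_gradient, LinearIsometryEquiv.norm_map]

/-- For `f ∈ C¹(ℝⁿ)` and every `x`, the maximal mean difference quotient is dominated by
the centered Hardy–Littlewood maximal function of `|∇f|`: `MQf(x) ≤ 𝕄(|∇f|)(x)`. -/
theorem MQ_le_hlMax_gradient {n : ℕ}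
    (f : EuclideanSpace ℝ (Fin n) → ℝ) (hf : ContDiff ℝ 1 f)
    (x : EuclideanSpace ℝ (Fin n)) :
    MQ f x ≤ hlMax (fun z => ‖gradient f z‖) x := by
  set M := hlMax (fun z => ‖gradient f z‖) x
  have hM : ∀ s > 0, ⨍⁻ w in ball x s, ‖fderiv ℝ f w‖ₑ ∂volume ≤ M := fun s hs => by
    refine le_iSup₂_of_le s hs (le_of_eq ?_)
    simp only [setLAverage_eq, ENNReal.div_eq_inv_mul, abs_norm, norm_gradient, ofReal_norm]
  refine iSup₂_le fun r hr => ?_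
  rw [← ENNReal.div_eq_inv_mul, ← setLAverage_eq]
  calc ⨍⁻ z in ball x r, ENNReal.ofReal (|f z - f x| / ‖z - x‖) ∂volume
      ≤ ⨍⁻ z in ball x r, (∫⁻ t in Ioc (0 : ℝ) 1, ‖fderiv ℝ f (lineMap x z t)‖ₑ) ∂volume :=
        setLAverage_mono_ae _ (.of_forall fun z =>
          ofReal_norm_sub_div_le_lintegral_enorm_fderiv_lineMap hf x z)
    _ ≤ M := setLAverage_ball_lintegral_lineMap_le volume
          (hf.continuous_fderiv one_ne_zero).enorm.measurable hM hr
end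

section
/- Let (X, d, μ) be a metric measure space satisfying the lens overlap condition: there exists C ≥ 1 such that for all x ≠ y with r = d(x,y), μ(B(x,r)) ≤ C μ(B(x,r) ∩ B(y,r)) and μ(B(y,r)) ≤ C μ(B(x,r) ∩ B(y,r)). Then for f ∈ L^1_loc(X, μ) and all points x ≠ y at which MQf is defined, |f(x) − f(y)| ≤ C d(x,y)(MQf(x) + MQf(y)), where MQf(x) = sup_{r>0} (1/μ(B(x,r))) ∫_{B(x,r)} |f(z) − f(x)|/d(z,x) dμ(z). -/
open MeasureTheory Metric

/-- The maximal mean difference quotient on a metric measure space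
(values in `ℝ≥0∞`). -/
noncomputable def MQm {X : Type*} [MetricSpace X] [MeasurableSpace X]
    (μ : Measure X) (f : X → ℝ) (x : X) : ENNReal :=
  ⨆ (r : ℝ) (_ : 0 < r),
    (μ (ball x r))⁻¹ * ∫⁻ z in ball x r, ENNReal.ofReal (|f z - f x| / dist z x) ∂μ

/-! Average the triangle inequality `|f x - f y| ≤ |f z - f x| + |f z - f y|` over the lens
`L = B(x, r) ∩ B(y, r)`, `r = d(x, y)`. Every `z ∈ B(x, r)` has `d(z, x) < r`, so
`∫_{B(x,r)} |f z - f x| ≤ r μ(B(x, r)) MQf(x)`, and the lens condition trades `μ(B(x, r))` for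
`C μ(L)`; dividing by `0 < μ(L) < ∞` gives the bound. Splitting the integral of the sum needs `f`
to be a.e. measurable on `L`: as `μ` is regular, `L` is a countable union of compact sets up to a
null set, and `f` is integrable on each of them. -/

open ENNReal

section InnerRegular

variable {X : Type*} [TopologicalSpace X] [T2Space X] [MeasurableSpace X]
  [OpensMeasurableSpace X] {μ : Measure X} [μ.InnerRegularCompactLTTop]

theorem MeasurableSet.exists_iUnion_isCompact_ae_eq {A : Set X} (hA : MeasurableSet A)
    (hA_fin : μ A ≠ ∞) :
    ∃ K : ℕ → Set X, (∀ n, K n ⊆ A ∧ IsCompact (K n)) ∧ (⋃ n, K n : Set X) =ᵐ[μ] A := by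
  have hK : ∀ n : ℕ, ∃ K ⊆ A, IsCompact K ∧ μ (A \ K) < (n : ℝ≥0∞)⁻¹ := fun n =>
    hA.exists_isCompact_sdiff_lt hA_fin (ENNReal.inv_ne_zero.2 (natCast_ne_top n))
  choose K hKA hKc hK_lt using hK
  refine ⟨K, fun n => ⟨hKA n, hKc n⟩, ae_eq_set.2 ⟨?_, ?_⟩⟩
  · rw [Set.sdiff_eq_empty.2 (Set.iUnion_subset hKA), measure_empty]
  · refine le_antisymm (ge_of_tendsto' ENNReal.tendsto_inv_nat_nhds_zero fun n => ?_) zero_le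
    exact (measure_mono (Set.sdiff_subset_sdiff_right (Set.subset_iUnion K n))).trans (hK_lt n).le

theorem MeasureTheory.LocallyIntegrable.aestronglyMeasurable_restrict_of_measure_ne_top
    {E : Type*} [NormedAddCommGroup E] {f : X → E} (hf : LocallyIntegrable f μ) {A : Set X}
    (hA : MeasurableSet A) (hA_fin : μ A ≠ ∞) :
    AEStronglyMeasurable f (μ.restrict A) := by
  obtain ⟨K, hK, hK_ae⟩ := hA.exists_iUnion_isCompact_ae_eq hA_fin
  rw [← Measure.restrict_congr_set hK_ae, aestronglyMeasurable_iUnion_iff]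
  exact fun n => (hf.integrableOn_isCompact (hK n).2).aestronglyMeasurable

end InnerRegular

theorem abs_sub_le_mul_diffQuot {X : Type*} [MetricSpace X] (f : X → ℝ) {x z : X} {r : ℝ}
    (hz : z ∈ ball x r) :
    |f z - f x| ≤ r * (|f z - f x| / dist z x) := by
  rcases eq_or_ne z x with rfl | hzx
  · simp
  · rw [mul_div_left_comm]
    refine le_mul_of_one_le_right (abs_nonneg _) ?_
    rw [one_le_div (dist_pos.2 hzx)]
    exact (mem_ball.1 hz).le

section MeanDifferenceQuotient

variable {X : Type*} [MetricSpace X] [MeasurableSpace X] (μ : Measure X) (f : X → ℝ)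

theorem le_MQm {x : X} {r : ℝ} (hr : 0 < r) :
    (μ (ball x r))⁻¹ * ∫⁻ z in ball x r, ENNReal.ofReal (|f z - f x| / dist z x) ∂μ ≤
      MQm μ f x :=
  le_iSup₂ (f := fun (r : ℝ) (_ : 0 < r) =>
    (μ (ball x r))⁻¹ * ∫⁻ z in ball x r, ENNReal.ofReal (|f z - f x| / dist z x) ∂μ) r hr

theorem setLIntegral_ball_diffQuot_le {x : X} {r : ℝ} (hr : 0 < r)
    (hfin : μ (ball x r) ≠ ∞) :
    ∫⁻ z in ball x r, ENNReal.ofReal (|f z - f x| / dist z x) ∂μ ≤ μ (ball x r) * MQm μ f x := by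
  rcases eq_or_ne (μ (ball x r)) 0 with h0 | h0
  · rw [setLIntegral_measure_zero _ _ h0]
    exact zero_le
  · calc ∫⁻ z in ball x r, ENNReal.ofReal (|f z - f x| / dist z x) ∂μ
        = μ (ball x r) * ((μ (ball x r))⁻¹ *
            ∫⁻ z in ball x r, ENNReal.ofReal (|f z - f x| / dist z x) ∂μ) := by
          rw [← mul_assoc, ENNReal.mul_inv_cancel h0 hfin, one_mul]
      _ ≤ μ (ball x r) * MQm μ f x := mul_le_mul_right (le_MQm μ f hr) _

variable [OpensMeasurableSpace X]

theorem setLIntegral_ball_abs_sub_le {x : X} {r : ℝ} (hr : 0 < r) (hfin : μ (ball x r) ≠ ∞) :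
    ∫⁻ z in ball x r, ENNReal.ofReal |f z - f x| ∂μ ≤
      ENNReal.ofReal r * (μ (ball x r) * MQm μ f x) :=
  calc ∫⁻ z in ball x r, ENNReal.ofReal |f z - f x| ∂μ
      ≤ ∫⁻ z in ball x r, ENNReal.ofReal r * ENNReal.ofReal (|f z - f x| / dist z x) ∂μ :=
        setLIntegral_mono' measurableSet_ball fun z hz => by
          rw [← ENNReal.ofReal_mul hr.le]
          exact ENNReal.ofReal_le_ofReal (abs_sub_le_mul_diffQuot f hz)
    _ = ENNReal.ofReal r * ∫⁻ z in ball x r, ENNReal.ofReal (|f z - f x| / dist z x) ∂μ :=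
        lintegral_const_mul' _ _ ofReal_ne_top
    _ ≤ ENNReal.ofReal r * (μ (ball x r) * MQm μ f x) :=
        mul_le_mul_right (setLIntegral_ball_diffQuot_le μ f hr hfin) _

end MeanDifferenceQuotient

theorem ofReal_abs_sub_mul_measure_le {X : Type*} [MeasurableSpace X] {μ : Measure X}
    {f : X → ℝ} {L : Set X} (hf : AEMeasurable f (μ.restrict L)) (x y : X) :
    ENNReal.ofReal |f x - f y| * μ L ≤
      ∫⁻ z in L, ENNReal.ofReal |f z - f x| ∂μ + ∫⁻ z in L, ENNReal.ofReal |f z - f y| ∂μ :=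
  calc ENNReal.ofReal |f x - f y| * μ L
      = ∫⁻ _ in L, ENNReal.ofReal |f x - f y| ∂μ := (setLIntegral_const L _).symm
    _ ≤ ∫⁻ z in L, (ENNReal.ofReal |f z - f x| + ENNReal.ofReal |f z - f y|) ∂μ :=
        lintegral_mono fun z => by
          rw [← ENNReal.ofReal_add (abs_nonneg _) (abs_nonneg _)]
          exact ENNReal.ofReal_le_ofReal
            ((abs_sub_le _ (f z) _).trans_eq (by rw [abs_sub_comm (f x)]))
    _ = ∫⁻ z in L, ENNReal.ofReal |f z - f x| ∂μ + ∫⁻ z in L, ENNReal.ofReal |f z - f y| ∂μ :=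
        lintegral_add_left' (by fun_prop) _

theorem pointwise_sobolev_metric_general {X : Type*} [MetricSpace X]
    [MeasurableSpace X] [BorelSpace X] (μ : Measure X) [μ.Regular]
    (hball_pos : ∀ (x : X) (r : ℝ), 0 < r → 0 < μ (ball x r))
    (hball_fin : ∀ (x : X) (r : ℝ), 0 < r → μ (ball x r) ≠ ⊤)
    (C : ℝ) (hC : 1 ≤ C)
    (hlens : ∀ x y : X, x ≠ y →
      μ (ball x (dist x y)) ≤
          ENNReal.ofReal C * μ (ball x (dist x y) ∩ ball y (dist x y)) ∧
      μ (ball y (dist x y)) ≤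
          ENNReal.ofReal C * μ (ball x (dist x y) ∩ ball y (dist x y)))
    (f : X → ℝ) (hf : LocallyIntegrable f μ) :
    ∀ x y : X, x ≠ y →
      ENNReal.ofReal |f x - f y| ≤
        ENNReal.ofReal (C * dist x y) * (MQm μ f x + MQm μ f y) := by
  intro x y hxy
  set r := dist x y
  set L := ball x r ∩ ball y r
  have hr : 0 < r := dist_pos.2 hxy
  obtain ⟨hx_lens, hy_lens⟩ := hlens x y hxy
  have hL_ne : μ L ≠ 0 := fun h0 => (hball_pos x r hr).ne' <|
    le_antisymm (hx_lens.trans_eq (by rw [h0, mul_zero])) zero_le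
  have hL_fin : μ L ≠ ∞ := measure_ne_top_of_subset Set.inter_subset_left (hball_fin x r hr)
  have hf_meas : AEMeasurable f (μ.restrict L) :=
    (hf.aestronglyMeasurable_restrict_of_measure_ne_top
      (measurableSet_ball.inter measurableSet_ball) hL_fin).aemeasurable
  refine (ENNReal.mul_le_mul_iff_left hL_ne hL_fin).1 ?_
  calc ENNReal.ofReal |f x - f y| * μ L
      ≤ ∫⁻ z in ball x r, ENNReal.ofReal |f z - f x| ∂μ +
          ∫⁻ z in ball y r, ENNReal.ofReal |f z - f y| ∂μ :=
        (ofReal_abs_sub_mul_measure_le hf_meas x y).trans <| add_le_add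
          (lintegral_mono_set Set.inter_subset_left) (lintegral_mono_set Set.inter_subset_right)
    _ ≤ ENNReal.ofReal r * (μ (ball x r) * MQm μ f x) +
          ENNReal.ofReal r * (μ (ball y r) * MQm μ f y) :=
        add_le_add (setLIntegral_ball_abs_sub_le μ f hr (hball_fin x r hr))
          (setLIntegral_ball_abs_sub_le μ f hr (hball_fin y r hr))
    _ ≤ ENNReal.ofReal r * (ENNReal.ofReal C * μ L * MQm μ f x) +
          ENNReal.ofReal r * (ENNReal.ofReal C * μ L * MQm μ f y) := by
        gcongr
    _ = ENNReal.ofReal (C * r) * (MQm μ f x + MQm μ f y) * μ L := by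
        rw [ENNReal.ofReal_mul (by linarith)]
        ring

/-- On a metric measure space `(X, d, μ)` satisfying the lens overlap condition with
constant `C`, every locally integrable `f` satisfies the pointwise Sobolev inequality
`|f x - f y| ≤ C d(x,y) (MQf(x) + MQf(y))` for all `x ≠ y`. -/
theorem pointwise_sobolev_metric {X : Type*} [MetricSpace X] [CompleteSpace X]
    [MeasurableSpace X] [BorelSpace X] (μ : Measure X) [μ.Regular]
    (hball_pos : ∀ (x : X) (r : ℝ), 0 < r → 0 < μ (ball x r))
    (hball_fin : ∀ (x : X) (r : ℝ), 0 < r → μ (ball x r) ≠ ⊤)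
    (C : ℝ) (hC : 1 ≤ C)
    (hlens : ∀ x y : X, x ≠ y →
      μ (ball x (dist x y)) ≤
          ENNReal.ofReal C * μ (ball x (dist x y) ∩ ball y (dist x y)) ∧
      μ (ball y (dist x y)) ≤
          ENNReal.ofReal C * μ (ball x (dist x y) ∩ ball y (dist x y)))
    (f : X → ℝ) (hf : LocallyIntegrable f μ) :
    ∀ x y : X, x ≠ y →
      ENNReal.ofReal |f x - f y| ≤
        ENNReal.ofReal (C * dist x y) * (MQm μ f x + MQm μ f y) :=
  pointwise_sobolev_metric_general μ hball_pos hball_fin C hC hlens f hf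
end
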